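/- arXiv:0901.2038 — 2 statements merged into one kernel-verified Lean document; each statement's English description precedes it below -/
import Mathlib

section
/- (Feynman parametrization) For any n ≥ 1 and positive real numbers b₁,…,bₙ > 0: 1/(b₁ b₂ ⋯ bₙ) = (n−1)! · ∫_{Δₙ} (z₁b₁ + ⋯ + zₙbₙ)^{-n} dσ(z), where Δₙ = {z ∈ ℝⁿ : zᵢ ≥ 0, Σzᵢ = 1} is the standard simplex with the measure dσ given by dz₁⋯dz_{n−1} (with zₙ = 1 − z₁ − ⋯ − z_{n−1}). -/
/-!
Induction on `n`. Slicing the simplex along the first coordinate `t`, the denominator is affine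
in `t` with slope `b₀ - bₙ`, so the inner integral is elementary and gives
`n (b₀ - bₙ) I(b₀,…,bₙ) = I(b₁,…,bₙ) - I(b₁,…,bₙ₋₁,b₀)`. By induction the right side is
`(1/(n-1)!) (1/(P bₙ) - 1/(P b₀)) = (b₀ - bₙ) / ((n-1)! b₀ ⋯ bₙ)` with `P = b₁ ⋯ bₙ₋₁`,
which proves the formula when `b₀ ≠ bₙ`. The case `b₀ = bₙ` follows by continuity, letting
`b₀` approach its value from above: the integrands are then dominated by the limiting one.
-/

open MeasureTheory Set Filter Topology

namespace Feynman

/-- The standard simplex of `ℝ^{n+1}`, seen through its first `n` coordinates. -/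
def simplex (n : ℕ) : Set (Fin n → ℝ) := {z | (∀ i, 0 ≤ z i) ∧ ∑ i, z i ≤ 1}

/-- `∑ᵢ zᵢ bᵢ` on the simplex, with the last coordinate `zₙ = 1 - ∑_{i<n} zᵢ` eliminated. -/
noncomputable def denom {n : ℕ} (b : Fin (n + 1) → ℝ) (z : Fin n → ℝ) : ℝ :=
  (∑ i, z i * b i.castSucc) + (1 - ∑ i, z i) * b (Fin.last n)

noncomputable def integral (n : ℕ) (b : Fin (n + 1) → ℝ) : ℝ :=
  ∫ z in simplex n, (denom b z ^ (n + 1))⁻¹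

theorem isClosed_simplex (n : ℕ) : IsClosed (simplex n) := by
  simp only [simplex, ofPred_and, ofPred_forall]
  exact (isClosed_iInter fun i => isClosed_le continuous_const (continuous_apply i)).inter
    (isClosed_le (by fun_prop) continuous_const)

theorem measurableSet_simplex (n : ℕ) : MeasurableSet (simplex n) :=
  (isClosed_simplex n).measurableSet

theorem simplex_subset_Icc (n : ℕ) : simplex n ⊆ Icc 0 1 := fun _ ⟨hz0, hz1⟩ =>
  ⟨hz0, fun i => (Finset.single_le_sum (fun j _ => hz0 j) (Finset.mem_univ i)).trans hz1⟩

theorem isCompact_simplex (n : ℕ) : IsCompact (simplex n) :=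
  isCompact_Icc.of_isClosed_subset (isClosed_simplex n) (simplex_subset_Icc n)

theorem cons_mem_simplex_iff {m : ℕ} (t : ℝ) (w : Fin m → ℝ) :
    (Fin.cons t w : Fin (m + 1) → ℝ) ∈ simplex (m + 1) ↔
      w ∈ simplex m ∧ t ∈ Icc 0 (1 - ∑ i, w i) := by
  simp only [simplex, mem_ofPred_eq, Fin.forall_fin_succ, Fin.cons_zero, Fin.cons_succ,
    Fin.sum_cons, mem_Icc]
  constructor
  · rintro ⟨⟨ht, hw⟩, hsum⟩
    exact ⟨⟨hw, by linarith⟩, ht, by linarith⟩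
  · rintro ⟨⟨hw, -⟩, ht, hsum⟩
    exact ⟨⟨ht, hw⟩, by linarith⟩

theorem continuous_denom {n : ℕ} (b : Fin (n + 1) → ℝ) : Continuous (denom b) := by
  unfold denom; fun_prop

theorem continuous_denom_left {n : ℕ} (z : Fin n → ℝ) :
    Continuous fun b : Fin (n + 1) → ℝ => denom b z := by
  unfold denom; fun_prop

theorem denom_mono {n : ℕ} {b c : Fin (n + 1) → ℝ} (hbc : b ≤ c) {z : Fin n → ℝ}
    (hz : z ∈ simplex n) : denom b z ≤ denom c z :=
  add_le_add (Finset.sum_le_sum fun i _ => mul_le_mul_of_nonneg_left (hbc _) (hz.1 i))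
    (mul_le_mul_of_nonneg_left (hbc _) (sub_nonneg.2 hz.2))

theorem denom_const {n : ℕ} (a : ℝ) (z : Fin n → ℝ) : denom (fun _ => a) z = a := by
  simp only [denom, ← Finset.sum_mul]; ring

theorem denom_pos {n : ℕ} {b : Fin (n + 1) → ℝ} (hb : ∀ i, 0 < b i) {z : Fin n → ℝ}
    (hz : z ∈ simplex n) : 0 < denom b z := by
  obtain ⟨j, hj⟩ := Finite.exists_min b
  calc 0 < b j := hb j
    _ = denom (fun _ => b j) z := (denom_const _ z).symm
    _ ≤ denom b z := denom_mono hj hz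

theorem denom_cons {m : ℕ} (b : Fin (m + 2) → ℝ) (t : ℝ) (w : Fin m → ℝ) :
    denom b (Fin.cons t w) = denom (Fin.tail b) w + t * (b 0 - b (Fin.last (m + 1))) := by
  simp only [denom, Fin.tail, Fin.sum_univ_succ, Fin.cons_zero, Fin.cons_succ,
    Fin.succ_castSucc, Fin.castSucc_zero, Fin.succ_last]
  ring

theorem denom_update_last {m : ℕ} (b : Fin (m + 1) → ℝ) (x : ℝ) (w : Fin m → ℝ) :
    denom (Function.update b (Fin.last m) x) w =
      denom b w + (1 - ∑ i, w i) * (x - b (Fin.last m)) := by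
  simp only [denom, Function.update_self,
    Function.update_of_ne (Fin.castSucc_lt_last _).ne]
  ring

theorem integrableOn_inv_denom_pow {n : ℕ} {b : Fin (n + 1) → ℝ} (hb : ∀ i, 0 < b i) (k : ℕ) :
    IntegrableOn (fun z => (denom b z ^ k)⁻¹) (simplex n) :=
  ContinuousOn.integrableOn_compact (isCompact_simplex n) <|
    ((continuous_denom b).continuousOn.pow k).inv₀ fun _ hz => (pow_pos (denom_pos hb hz) k).ne'

theorem mul_integral_inv_pow_affine (k : ℕ) {A c s : ℝ} (hA : 0 < A) (hAs : 0 < A + s * c) :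
    k * c * ∫ t in (0 : ℝ)..s, ((A + t * c) ^ (k + 1))⁻¹ = (A ^ k)⁻¹ - ((A + s * c) ^ k)⁻¹ := by
  have hpos : ∀ t ∈ uIcc 0 s, 0 < A + t * c := by
    intro t ht
    rcases le_total 0 s with hs | hs
    · rw [uIcc_of_le hs] at ht
      rcases le_total 0 c with hc | hc <;> nlinarith [ht.1, ht.2]
    · rw [uIcc_of_ge hs] at ht
      rcases le_total 0 c with hc | hc <;> nlinarith [ht.1, ht.2]
  have hderiv : ∀ t ∈ uIcc 0 s,
      HasDerivAt (fun t => -((A + t * c) ^ k)⁻¹) (k * c * ((A + t * c) ^ (k + 1))⁻¹) t := by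
    intro t ht
    have hne := (hpos t ht).ne'
    refine HasDerivAt.congr_deriv
      (((((hasDerivAt_id t).mul_const c).const_add A).pow k).inv (pow_ne_zero k hne)).neg ?_
    rcases k with _ | k
    · simp
    · simp only [id, one_mul, Nat.add_sub_cancel, Pi.pow_apply]
      field_simp
      ring
  have hcont : ContinuousOn (fun t => ((A + t * c) ^ (k + 1))⁻¹) (uIcc 0 s) :=
    (by fun_prop : Continuous fun t => (A + t * c) ^ (k + 1)).continuousOn.inv₀
      fun t ht => (pow_pos (hpos t ht) _).ne'
  rw [← intervalIntegral.integral_const_mul,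
    intervalIntegral.integral_eq_sub_of_hasDerivAt hderiv (hcont.intervalIntegrable.const_mul _)]
  simp only [zero_mul, add_zero]
  ring

theorem setIntegral_simplex_succ {E : Type*} [NormedAddCommGroup E] [NormedSpace ℝ E]
    [CompleteSpace E] {m : ℕ} {g : (Fin (m + 1) → ℝ) → E} (hg : IntegrableOn g (simplex (m + 1))) :
    ∫ z in simplex (m + 1), g z =
      ∫ w in simplex m, ∫ t in (0 : ℝ)..(1 - ∑ i, w i), g (Fin.cons t w) := by
  set e := (MeasurableEquiv.piFinSuccAbove (fun _ : Fin (m + 1) => ℝ) 0).symm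
  have he : ∀ p, e p = Fin.cons p.1 p.2 := fun p => by simp [e, Fin.consEquiv]
  have hmp : MeasurePreserving e (volume.prod volume) volume :=
    (volume_preserving_piFinSuccAbove (fun _ : Fin (m + 1) => ℝ) 0).symm
  have hslice : ∀ w : Fin m → ℝ, ∫ t, (simplex (m + 1)).indicator g (Fin.cons t w) =
      (simplex m).indicator (fun w => ∫ t in (0 : ℝ)..(1 - ∑ i, w i), g (Fin.cons t w)) w := by
    intro w
    by_cases hw : w ∈ simplex m
    · rw [indicator_of_mem hw, intervalIntegral.integral_of_le (sub_nonneg.2 hw.2),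
        ← integral_Icc_eq_integral_Ioc, ← integral_indicator measurableSet_Icc]
      congr 1 with t
      by_cases ht : t ∈ Icc 0 (1 - ∑ i, w i)
      · rw [indicator_of_mem ((cons_mem_simplex_iff t w).2 ⟨hw, ht⟩), indicator_of_mem ht]
      · rw [indicator_of_notMem (fun h => ht ((cons_mem_simplex_iff t w).1 h).2),
          indicator_of_notMem ht]
    · rw [indicator_of_notMem hw]
      exact integral_eq_zero_of_ae <| .of_forall fun t =>
        indicator_of_notMem (fun h => hw ((cons_mem_simplex_iff t w).1 h).1) g
  have hint : Integrable (fun p => (simplex (m + 1)).indicator g (e p)) (volume.prod volume) :=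
    hmp.integrable_comp_emb e.measurableEmbedding |>.2 <|
      (integrable_indicator_iff (measurableSet_simplex _)).2 hg
  calc ∫ z in simplex (m + 1), g z = ∫ z, (simplex (m + 1)).indicator g z :=
        (integral_indicator (measurableSet_simplex _)).symm
    _ = ∫ p, (simplex (m + 1)).indicator g (e p) ∂(volume.prod volume) :=
        (hmp.integral_comp' _).symm
    _ = ∫ w, ∫ t, (simplex (m + 1)).indicator g (Fin.cons t w) := by
        rw [integral_prod_symm _ hint]; simp only [he]
    _ = _ := by simp only [hslice, integral_indicator (measurableSet_simplex m)]

theorem integral_dim_zero (b : Fin 1 → ℝ) : integral 0 b = (b 0)⁻¹ := by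
  have huniv : simplex 0 = univ := eq_univ_of_forall fun _ => ⟨finZeroElim, by simp⟩
  simp [integral, huniv, denom, measureReal_def, volume_pi]

theorem forall_pos_update {ι : Type*} [DecidableEq ι] {f : ι → ℝ} (hf : ∀ i, 0 < f i) {a : ι}
    {x : ℝ} (hx : 0 < x) : ∀ i, 0 < Function.update f a x i :=
  (Function.forall_update_iff f fun _ y => 0 < y).2 ⟨hx, fun i _ => hf i⟩

theorem mul_integral_succ_eq_sub {m : ℕ} {b : Fin (m + 2) → ℝ} (hb : ∀ i, 0 < b i) :
    (m + 1) * (b 0 - b (Fin.last (m + 1))) * integral (m + 1) b =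
      integral m (Fin.tail b) - integral m (Function.update (Fin.tail b) (Fin.last m) (b 0)) := by
  set d := b 0 - b (Fin.last (m + 1))
  set b' := Function.update (Fin.tail b) (Fin.last m) (b 0)
  have htail : ∀ i, 0 < Fin.tail b i := fun i => hb _
  have hb' : ∀ i, 0 < b' i := forall_pos_update htail (hb 0)
  have hinner : ∀ w ∈ simplex m,
      (m + 1) * d * ∫ t in (0 : ℝ)..(1 - ∑ i, w i), (denom b (Fin.cons t w) ^ (m + 1 + 1))⁻¹ =
        (denom (Fin.tail b) w ^ (m + 1))⁻¹ - (denom b' w ^ (m + 1))⁻¹ := by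
    intro w hw
    have hdenom' : denom b' w = denom (Fin.tail b) w + (1 - ∑ i, w i) * d := by
      simp [b', denom_update_last, d, Fin.tail]
    simp only [denom_cons, hdenom']
    exact_mod_cast mul_integral_inv_pow_affine (m + 1) (denom_pos htail hw)
      (hdenom' ▸ denom_pos hb' hw)
  rw [integral, setIntegral_simplex_succ (integrableOn_inv_denom_pow hb _), ← integral_const_mul,
    setIntegral_congr_fun (measurableSet_simplex m) hinner,
    integral_sub (integrableOn_inv_denom_pow htail _) (integrableOn_inv_denom_pow hb' _)]
  rfl

theorem inv_prod_tail_sub_inv_prod_update {m : ℕ} {b : Fin (m + 2) → ℝ} (hb : ∀ i, b i ≠ 0) :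
    (∏ i, Fin.tail b i)⁻¹ - (∏ i, Function.update (Fin.tail b) (Fin.last m) (b 0) i)⁻¹ =
      (b 0 - b (Fin.last (m + 1))) * (∏ i, b i)⁻¹ := by
  have hP : ∏ i : Fin m, b i.castSucc.succ ≠ 0 := Finset.prod_ne_zero_iff.2 fun i _ => hb _
  have h0 := hb 0
  have hlast := hb (Fin.last (m + 1))
  simp only [Fin.prod_univ_castSucc (n := m), Fin.prod_univ_succ (n := m + 1), Fin.tail,
    Function.update_self, Function.update_of_ne (Fin.castSucc_lt_last _).ne, Fin.succ_last]
  field_simp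

theorem tendsto_integral_of_le {ι : Type*} {l : Filter ι} [l.IsCountablyGenerated] {n : ℕ}
    {b : Fin (n + 1) → ℝ} (hb : ∀ i, 0 < b i) {c : ι → Fin (n + 1) → ℝ} (hc : Tendsto c l (𝓝 b))
    (hbc : ∀ᶠ j in l, b ≤ c j) :
    Tendsto (fun j => integral n (c j)) l (𝓝 (integral n b)) := by
  refine tendsto_integral_filter_of_dominated_convergence (fun z => (denom b z ^ (n + 1))⁻¹)
    (.of_forall fun j => ((continuous_denom (c j)).measurable.pow_const _).inv.aestronglyMeasurable)
    ?_ (integrableOn_inv_denom_pow hb _) ?_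
  · filter_upwards [hbc] with j hj
    refine (ae_restrict_iff' (measurableSet_simplex n)).2 (.of_forall fun z hz => ?_)
    have h0 := denom_pos hb hz
    have hle := denom_mono hj hz
    rw [Real.norm_of_nonneg (inv_nonneg.2 (pow_nonneg (h0.trans_le hle).le _))]
    exact inv_anti₀ (pow_pos h0 _) (pow_le_pow_left₀ h0.le hle _)
  · refine (ae_restrict_iff' (measurableSet_simplex n)).2 (.of_forall fun z hz => ?_)
    exact ((((continuous_denom_left z).tendsto b).comp hc).pow _).inv₀
      (pow_pos (denom_pos hb hz) _).ne'

theorem inv_prod_eq_of_forall_sub_mul_eq {m : ℕ}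
    (h : ∀ c : Fin (m + 2) → ℝ, (∀ i, 0 < c i) →
      (c 0 - c (Fin.last (m + 1))) * (∏ i, c i)⁻¹ =
        (c 0 - c (Fin.last (m + 1))) * ((m + 1).factorial * integral (m + 1) c))
    {b : Fin (m + 2) → ℝ} (hb : ∀ i, 0 < b i) :
    (∏ i, b i)⁻¹ = (m + 1).factorial * integral (m + 1) b := by
  by_cases hne : b 0 = b (Fin.last (m + 1))
  swap
  · exact mul_left_cancel₀ (sub_ne_zero.2 hne) (h b hb)
  set c : ℝ → Fin (m + 2) → ℝ := fun t => Function.update b 0 t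
  have hlast : Fin.last (m + 1) ≠ 0 := Fin.last_pos.ne'
  have hcont : Continuous c := continuous_const.update 0 continuous_id
  have hc : Tendsto c (𝓝[>] (b 0)) (𝓝 b) := by
    simpa [c] using (hcont.tendsto (b 0)).mono_left nhdsWithin_le_nhds
  have hbc : ∀ᶠ t in 𝓝[>] (b 0), b ≤ c t := by
    filter_upwards [self_mem_nhdsWithin] with t ht
    exact le_update_iff.2 ⟨le_of_lt ht, fun _ _ => le_rfl⟩
  have heq : ∀ᶠ t in 𝓝[>] (b 0), (m + 1).factorial * integral (m + 1) (c t) = (∏ i, c t i)⁻¹ := by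
    filter_upwards [self_mem_nhdsWithin] with t ht
    have hct : ∀ i, 0 < c t i := forall_pos_update hb ((hb 0).trans ht)
    have hd : c t 0 - c t (Fin.last (m + 1)) ≠ 0 := by
      simpa [c, Function.update_of_ne hlast, ← hne, sub_eq_zero] using (ne_of_lt ht).symm
    exact (mul_left_cancel₀ hd (h _ hct)).symm
  refine tendsto_nhds_unique ?_ (((tendsto_integral_of_le hb hc hbc).const_mul _).congr' heq)
  exact (tendsto_finsetProd _ fun i _ => (continuous_apply i).tendsto b |>.comp hc).inv₀
    (Finset.prod_pos fun i _ => hb i).ne'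

theorem inv_prod_eq_factorial_mul_integral (n : ℕ) {b : Fin (n + 1) → ℝ} (hb : ∀ i, 0 < b i) :
    (∏ i, b i)⁻¹ = n.factorial * integral n b := by
  induction n with
  | zero => simp [integral_dim_zero]
  | succ m ih =>
    refine inv_prod_eq_of_forall_sub_mul_eq (fun c hc => ?_) hb
    have htail : ∀ i, 0 < Fin.tail c i := fun i => hc _
    calc (c 0 - c (Fin.last (m + 1))) * (∏ i, c i)⁻¹
        = (∏ i, Fin.tail c i)⁻¹ - (∏ i, Function.update (Fin.tail c) (Fin.last m) (c 0) i)⁻¹ :=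
          (inv_prod_tail_sub_inv_prod_update fun i => (hc i).ne').symm
      _ = m.factorial * (integral m (Fin.tail c) -
            integral m (Function.update (Fin.tail c) (Fin.last m) (c 0))) := by
          rw [ih htail, ih (forall_pos_update htail (hc 0))]
          ring
      _ = _ := by
          rw [← mul_integral_succ_eq_sub hc]
          push_cast [Nat.factorial_succ]
          ring

end Feynman

/-- Feynman parametrization: for positive reals `b₀,…,bₙ`,
`1/(b₀⋯bₙ) = n! ∫_{Δ} (z₁b₀ + ⋯ + zₙb_{n-1} + (1−Σz)bₙ)^{−(n+1)} dz`,
the integral running over the standard simplex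
`{z ∈ ℝⁿ : zᵢ ≥ 0, Σ zᵢ ≤ 1}` with Lebesgue measure. -/
theorem feynman_parametrization
    (n : ℕ) (b : Fin (n + 1) → ℝ) (hb : ∀ i, 0 < b i) :
    (∏ i, b i)⁻¹ =
      (n.factorial : ℝ) *
        ∫ z in {z : Fin n → ℝ | (∀ i, 0 ≤ z i) ∧ ∑ i, z i ≤ 1},
          (((∑ i, z i * b i.castSucc) + (1 - ∑ i, z i) * b (Fin.last n)) ^ (n + 1))⁻¹ :=
  Feynman.inv_prod_eq_factorial_mul_integral n hb
end

section
/- The integral over the 2-dimensional standard simplex ∫_{α,β,γ>0, α+β+γ=1} αβγ·(αβ + βγ + γα)^{-3} dα dβ (with γ = 1−α−β) equals 1/2. -/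
/-!
With `γ = 1 - α - β` and `e₂ = αβ + βγ + γα`, the quadratic Cremona map
`(α : β : γ) ↦ (βγ : γα : αβ) = (1/α : 1/β : 1/γ)` restricts to an involution of the open
simplex whose Jacobian determinant is `αβγ / e₂³`, exactly the integrand. By the change of
variables formula the integral is therefore the area of the simplex, `1/2`.
-/

open MeasureTheory Set

namespace TriangleFeynman

noncomputable section

def openSimplex : Set (ℝ × ℝ) := {p | 0 < p.1 ∧ 0 < p.2 ∧ p.1 + p.2 < 1}

def third (p : ℝ × ℝ) : ℝ := 1 - p.1 - p.2

def e₂ (p : ℝ × ℝ) : ℝ := p.1 * p.2 + p.2 * third p + third p * p.1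

def cremona (p : ℝ × ℝ) : ℝ × ℝ := (p.2 * third p / e₂ p, third p * p.1 / e₂ p)

def fderivCremona (p : ℝ × ℝ) : ℝ × ℝ →L[ℝ] ℝ × ℝ :=
  (Matrix.toLin (.finTwoProd ℝ) (.finTwoProd ℝ)
    !![-p.2 * (e₂ p + third p * (third p - p.1)) / e₂ p ^ 2,
        p.1 * (p.2 + third p) * (third p - p.2) / e₂ p ^ 2;
       p.2 * (p.1 + third p) * (third p - p.1) / e₂ p ^ 2,
        -p.1 * (e₂ p + third p * (third p - p.2)) / e₂ p ^ 2]).toContinuousLinearMap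

lemma mem_openSimplex_iff {p : ℝ × ℝ} :
    p ∈ openSimplex ↔ 0 < p.1 ∧ 0 < p.2 ∧ 0 < third p := by
  simp only [openSimplex, third, mem_ofPred_eq, sub_sub, sub_pos]

lemma fst_add_snd_add_third (p : ℝ × ℝ) : p.1 + p.2 + third p = 1 := by
  rw [third]; ring

lemma isOpen_openSimplex : IsOpen openSimplex :=
  (isOpen_lt continuous_const continuous_fst).inter <|
    (isOpen_lt continuous_const continuous_snd).inter <|
      isOpen_lt (continuous_fst.add continuous_snd) continuous_const

lemma e₂_pos {p : ℝ × ℝ} (hp : p ∈ openSimplex) : 0 < e₂ p := by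
  obtain ⟨hα, hβ, hγ⟩ := mem_openSimplex_iff.1 hp
  unfold e₂; positivity

lemma third_cremona {p : ℝ × ℝ} (hp : e₂ p ≠ 0) : third (cremona p) = p.1 * p.2 / e₂ p := by
  rw [third, cremona]
  field_simp
  rw [e₂]
  ring

lemma e₂_cremona {p : ℝ × ℝ} (hp : e₂ p ≠ 0) :
    e₂ (cremona p) = p.1 * p.2 * third p / e₂ p ^ 2 := by
  rw [e₂, third_cremona hp, cremona]
  field_simp
  linear_combination p.1 * p.2 * third p * fst_add_snd_add_third p

lemma cremona_mapsTo : MapsTo cremona openSimplex openSimplex := by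
  intro p hp
  obtain ⟨hα, hβ, hγ⟩ := mem_openSimplex_iff.1 hp
  have hE := e₂_pos hp
  rw [mem_openSimplex_iff, third_cremona hE.ne']
  simp only [cremona]
  refine ⟨?_, ?_, ?_⟩ <;> positivity

lemma cremona_cremona {p : ℝ × ℝ} (hp : p ∈ openSimplex) : cremona (cremona p) = p := by
  obtain ⟨hα, hβ, hγ⟩ := mem_openSimplex_iff.1 hp
  have hE := (e₂_pos hp).ne'
  rw [cremona, e₂_cremona hE, third_cremona hE, cremona]
  ext <;> dsimp only <;> field_simp

lemma cremona_bijOn : BijOn cremona openSimplex openSimplex :=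
  InvOn.bijOn ⟨fun _ => cremona_cremona, fun _ => cremona_cremona⟩ cremona_mapsTo cremona_mapsTo

lemma hasFDerivAt_cremona {p : ℝ × ℝ} (hp : e₂ p ≠ 0) :
    HasFDerivAt cremona (fderivCremona p) p := by
  have hα : HasFDerivAt (fun q : ℝ × ℝ => q.1) (.fst ℝ ℝ ℝ) p := hasFDerivAt_fst
  have hβ : HasFDerivAt (fun q : ℝ × ℝ => q.2) (.snd ℝ ℝ ℝ) p := hasFDerivAt_snd
  have hγ : HasFDerivAt third (0 - .fst ℝ ℝ ℝ - .snd ℝ ℝ ℝ) p :=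
    ((hasFDerivAt_const 1 p).sub hα).sub hβ
  have hE : HasFDerivAt e₂ _ p := ((hα.fun_mul hβ).add (hβ.fun_mul hγ)).add (hγ.fun_mul hα)
  have hE_inv := (hasDerivAt_inv hp).comp_hasFDerivAt p hE
  have hcremona : cremona = fun q => (q.2 * third q * (e₂ q)⁻¹, third q * q.1 * (e₂ q)⁻¹) := by
    funext q; simp only [cremona, div_eq_mul_inv]
  rw [hcremona]
  refine (((hβ.fun_mul hγ).mul hE_inv).prodMk ((hγ.fun_mul hα).mul hE_inv)).congr_fderiv ?_
  rw [fderivCremona, Matrix.toLin_finTwoProd_toContinuousLinearMap]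
  ext <;> simp only [zero_sub, smul_add, neg_smul, smul_neg, Function.comp_apply,
    ContinuousLinearMap.comp_apply, ContinuousLinearMap.inl_apply, ContinuousLinearMap.inr_apply,
    ContinuousLinearMap.prod_apply, add_apply, neg_apply, smul_apply, sub_apply,
    ContinuousLinearMap.coe_fst', ContinuousLinearMap.coe_snd', smul_eq_mul] <;> field_simp <;> rw [e₂] <;> ring

lemma det_fderivCremona {p : ℝ × ℝ} (hp : e₂ p ≠ 0) :
    (fderivCremona p).det = p.1 * p.2 * third p / e₂ p ^ 3 := by
  simp only [fderivCremona, LinearMap.det_toContinuousLinearMap, LinearMap.det_toLin,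
    Matrix.det_fin_two_of]
  field_simp
  rw [e₂]
  linear_combination p.1 * p.2 * third p * (p.1 * p.2 + p.2 * third p + third p * p.1) *
    fst_add_snd_add_third p

lemma abs_det_fderivCremona {p : ℝ × ℝ} (hp : p ∈ openSimplex) :
    |(fderivCremona p).det| = p.1 * p.2 * third p / e₂ p ^ 3 := by
  obtain ⟨hα, hβ, hγ⟩ := mem_openSimplex_iff.1 hp
  have hE := e₂_pos hp
  rw [det_fderivCremona hE.ne', abs_of_pos (by positivity)]

lemma openSimplex_eq_regionBetween :
    openSimplex = regionBetween 0 (fun x => 1 - x) (Ioo 0 1) := by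
  ext p
  simp only [openSimplex, regionBetween, mem_ofPred_eq, mem_Ioo, Pi.zero_apply]
  constructor
  · rintro ⟨hα, hβ, hαβ⟩
    exact ⟨⟨hα, by linarith⟩, hβ, by linarith⟩
  · rintro ⟨⟨hα, -⟩, hβ, hαβ⟩
    exact ⟨hα, hβ, by linarith⟩

lemma volume_real_openSimplex : volume.real openSimplex = 1 / 2 := by
  have hint : ∫ x in Ioo (0 : ℝ) 1, (1 - x) = 1 / 2 := by
    rw [← integral_Ioc_eq_integral_Ioo, ← intervalIntegral.integral_of_le zero_le_one,
      intervalIntegral.integral_sub intervalIntegrable_const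
      intervalIntegral.intervalIntegrable_id, integral_id]
    norm_num
  rw [measureReal_def, openSimplex_eq_regionBetween, Measure.volume_eq_prod,
    volume_regionBetween_eq_integral (f := 0) (g := fun x => 1 - x) integrableOn_zero
      ((continuous_const.sub continuous_id).integrableOn_Icc.mono_set Ioo_subset_Icc_self)
      measurableSet_Ioo fun x hx => sub_nonneg.2 hx.2.le]
  simp [hint]

end

end TriangleFeynman

open TriangleFeynman in
/-- The triangle-diagram Feynman parameter integral:
`∫_{α,β>0, α+β<1} αβγ (αβ+βγ+γα)^{−3} dα dβ = 1/2` with `γ = 1−α−β`. -/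
theorem triangle_feynman_integral :
    ∫ p in {p : ℝ × ℝ | 0 < p.1 ∧ 0 < p.2 ∧ p.1 + p.2 < 1},
        p.1 * p.2 * (1 - p.1 - p.2) /
          (p.1 * p.2 + p.2 * (1 - p.1 - p.2) + (1 - p.1 - p.2) * p.1) ^ 3
      = 1 / 2 := by
  have hs : MeasurableSet openSimplex := isOpen_openSimplex.measurableSet
  calc _ = ∫ p in openSimplex, |(fderivCremona p).det| • (1 : ℝ) :=
        setIntegral_congr_fun hs fun p hp => by
          rw [smul_eq_mul, mul_one, abs_det_fderivCremona hp]; rfl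
    _ = ∫ _ in cremona '' openSimplex, (1 : ℝ) :=
        (integral_image_eq_integral_abs_det_fderiv_smul volume hs
          (fun p hp => (hasFDerivAt_cremona (e₂_pos hp).ne').hasFDerivWithinAt)
          cremona_bijOn.injOn fun _ => 1).symm
    _ = 1 / 2 := by
        rw [cremona_bijOn.image_eq, setIntegral_const, smul_eq_mul, mul_one,
          volume_real_openSimplex]
end
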